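/- arXiv:math/0406303 — 4 statements merged into one kernel-verified Lean document; each statement's English description precedes it below -/
import Mathlib

section
/- Let N ≥ 2, k ≥ 1, and let [a], [b], [c] be S_k-orbits of (Z/N)^k, with [b] the orbit of (1^m, 0^{k-m}) for some 0 ≤ m ≤ k. Define T([a],[b],[c]) = {(x,y,z) ∈ [a]×[b]×[c] : x + y = z} with S_k acting diagonally, and let M be the number of S_k-orbits of T([a],[b],[c]). Then M ≤ 1; that is, if M ≠ 0 then M = 1. -/
open Finset

/-- The `S_k`-orbit of a `k`-tuple with entries in `ZMod N`. -/
def orb {N k : ℕ} (x : Fin k → ZMod N) : Set (Fin k → ZMod N) :=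
  {y | ∃ σ : Equiv.Perm (Fin k), y = x ∘ σ}

/-- The set `T([a],[b],[c])` of triples `(x,y,z) ∈ [a]×[b]×[c]` with `x + y = z`. -/
def Triples {N k : ℕ} (a b c : Fin k → ZMod N) :=
  {p : (Fin k → ZMod N) × (Fin k → ZMod N) × (Fin k → ZMod N) //
    p.1 ∈ orb a ∧ p.2.1 ∈ orb b ∧ p.2.2 ∈ orb c ∧ p.1 + p.2.1 = p.2.2}

/-- `Mcoef a b c` is the number of `S_k`-orbits of `T([a],[b],[c])` under the
diagonal action `σ·(x,y,z) = (x∘σ, y∘σ, z∘σ)`. -/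
noncomputable def Mcoef {N k : ℕ} (a b c : Fin k → ZMod N) : ℕ :=
  Nat.card (Quot (fun p q : Triples a b c =>
    ∃ σ : Equiv.Perm (Fin k),
      q.1.1 = p.1.1 ∘ σ ∧ q.1.2.1 = p.1.2.1 ∘ σ ∧ q.1.2.2 = p.1.2.2 ∘ σ))

section Aux

variable {k : ℕ} {β : Type*} [DecidableEq β]

/-- Count of indices where `f` takes value `v`. -/
def cnt (f : Fin k → β) (v : β) : ℕ := (univ.filter (fun i => f i = v)).card

lemma cnt_comp_perm (f : Fin k → β) (σ : Equiv.Perm (Fin k)) (v : β) :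
    cnt (f ∘ σ) v = cnt f v := by
  unfold cnt
  apply Finset.card_bij' (fun a _ => σ a) (fun b _ => σ.symm b)
  · intro a ha; simp only [mem_filter, mem_univ, true_and] at ha ⊢; exact ha
  · intro b hb; simp only [mem_filter, mem_univ, true_and, Function.comp_apply,
      Equiv.apply_symm_apply] at hb ⊢; exact hb
  · intro a _; simp
  · intro b _; simp

lemma exists_perm_of_cnt {f g : Fin k → β} (h : ∀ v, cnt f v = cnt g v) :
    ∃ σ : Equiv.Perm (Fin k), f = g ∘ σ := by
  classical
  have e : ∀ v : β, {i : Fin k // f i = v} ≃ {i : Fin k // g i = v} := by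
    intro v
    apply Fintype.equivOfCardEq
    rw [Fintype.card_subtype, Fintype.card_subtype]
    exact h v
  refine ⟨Equiv.ofFiberEquiv e, ?_⟩
  funext i
  exact (Equiv.ofFiberEquiv_map e i).symm

end Aux

lemma eq_const_of_shift {N : ℕ} [NeZero N] (e : ZMod N → ℤ)
    (h : ∀ w, e (w - 1) = e w) (v : ZMod N) : e v = e 0 := by
  have key : ∀ j : ℕ, e (0 - (j : ZMod N)) = e 0 := by
    intro j
    induction j with
    | zero => simp
    | succ n ih =>
        have h1 : ((n + 1 : ℕ) : ZMod N) = (n : ZMod N) + 1 := by push_cast; ring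
        have h2 : (0 : ZMod N) - ((n : ZMod N) + 1) = (0 - (n : ZMod N)) - 1 := by ring
        rw [h1, h2, h, ih]
  have := key ((-v).val)
  rwa [ZMod.natCast_zmod_val, zero_sub, neg_neg] at this

lemma eq_of_shift_sum {N : ℕ} [NeZero N] (n₁ n₂ : ZMod N → ℤ)
    (h : ∀ w, n₁ (w - 1) - n₁ w = n₂ (w - 1) - n₂ w)
    (hs : ∑ v, n₁ v = ∑ v, n₂ v) : n₁ = n₂ := by
  set e := fun v => n₁ v - n₂ v with he
  have hc : ∀ w, e (w - 1) = e w := by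
    intro w; simp only [he]; have := h w; linarith
  have hconst : ∀ v, e v = e 0 := eq_const_of_shift e hc
  have hsum0 : ∑ v, e v = 0 := by
    simp only [he, Finset.sum_sub_distrib, hs, sub_self]
  have hNe : (N : ℤ) * e 0 = 0 := by
    rw [← hsum0, Finset.sum_congr rfl (fun v _ => hconst v)]
    simp [Finset.card_univ, ZMod.card, mul_comm]
  have hN0 : (N : ℤ) ≠ 0 := by exact_mod_cast (NeZero.ne N)
  have he0 : e 0 = 0 := by
    rcases mul_eq_zero.mp hNe with h' | h'
    · exact absurd h' hN0
    · exact h'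
  funext v
  have := hconst v
  rw [he0] at this
  simp only [he] at this
  linarith

section Main

variable {N k : ℕ}

/-- pair count -/
def npair (x y : Fin k → ZMod N) (v ε : ZMod N) : ℕ :=
  (univ.filter (fun i => x i = v ∧ y i = ε)).card

lemma cnt_x_split (hN : (0 : ZMod N) ≠ 1) (x y : Fin k → ZMod N)
    (hy : ∀ i, y i = 0 ∨ y i = 1) (v : ZMod N) :
    cnt x v = npair x y v 0 + npair x y v 1 := by
  unfold cnt npair
  rw [← Finset.card_union_of_disjoint]
  · congr 1
    ext i
    simp only [mem_union, mem_filter, mem_univ, true_and]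
    rcases hy i with h | h <;> simp [h] <;> tauto
  · rw [Finset.disjoint_filter]
    rintro i _ ⟨_, h0⟩ ⟨_, h1⟩
    exact hN (h0 ▸ h1.symm ▸ rfl)

lemma cnt_z_split (hN : (0 : ZMod N) ≠ 1) (x y : Fin k → ZMod N)
    (hy : ∀ i, y i = 0 ∨ y i = 1) (w : ZMod N) :
    cnt (x + y) w = npair x y w 0 + npair x y (w - 1) 1 := by
  unfold cnt npair
  rw [← Finset.card_union_of_disjoint]
  · congr 1
    ext i
    simp only [mem_union, mem_filter, mem_univ, true_and, Pi.add_apply]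
    rcases hy i with h | h
    · rw [h]
      constructor
      · intro hw; left; exact ⟨by rw [← hw]; ring, rfl⟩
      · rintro (⟨h1, _⟩ | ⟨_, h1⟩)
        · rw [h1]; ring
        · exact absurd h1 hN
    · rw [h]
      constructor
      · intro hw; right; exact ⟨by rw [← hw]; ring, rfl⟩
      · rintro (⟨_, h1⟩ | ⟨h1, _⟩)
        · exact absurd h1.symm hN
        · rw [h1]; ring
  · rw [Finset.disjoint_filter]
    rintro i _ ⟨_, h0⟩ ⟨_, h1⟩
    exact hN (h0 ▸ h1.symm ▸ rfl)

lemma sum_npair (x y : Fin k → ZMod N) [NeZero N] :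
    ∑ v, npair x y v 1 = cnt y 1 := by
  unfold cnt npair
  rw [Finset.card_eq_sum_card_fiberwise (f := x) (t := univ) (fun i _ => mem_univ _)]
  apply Finset.sum_congr rfl
  intro v _
  rw [Finset.filter_filter]
  congr 1
  ext i
  simp [and_comm]

end Main

lemma main_rel' {N k m : ℕ} (hN : 2 ≤ N)
    (a c : Fin k → ZMod N) {x y z x' y' z' : Fin k → ZMod N}
    (hxa : x ∈ orb a) (hyb : y ∈ orb (fun i : Fin k => if (i : ℕ) < m then 1 else 0))
    (hzc : z ∈ orb c) (hsum : x + y = z)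
    (hxa' : x' ∈ orb a) (hyb' : y' ∈ orb (fun i : Fin k => if (i : ℕ) < m then 1 else 0))
    (hzc' : z' ∈ orb c) (hsum' : x' + y' = z') :
    ∃ σ : Equiv.Perm (Fin k), x' = x ∘ σ ∧ y' = y ∘ σ ∧ z' = z ∘ σ := by
  haveI : NeZero N := ⟨by omega⟩
  haveI : Fact (1 < N) := ⟨by omega⟩
  have h01 : (0 : ZMod N) ≠ 1 := zero_ne_one
  -- y, y' take values 0 or 1
  have hy01 : ∀ (w : Fin k → ZMod N),
      w ∈ orb (fun i : Fin k => if (i : ℕ) < m then 1 else 0) → ∀ i, w i = 0 ∨ w i = 1 := by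
    rintro w ⟨σ, rfl⟩ i
    simp only [Function.comp_apply]
    by_cases h : ((σ i : Fin k) : ℕ) < m <;> simp [h]
  have hy := hy01 y hyb
  have hy' := hy01 y' hyb'
  -- counts of x, x' agree (both equal cnt a); same for z, z', y, y'
  have hcx : ∀ v, cnt x v = cnt a v := by
    obtain ⟨σ, rfl⟩ := hxa; exact fun v => cnt_comp_perm a σ v
  have hcx' : ∀ v, cnt x' v = cnt a v := by
    obtain ⟨σ, rfl⟩ := hxa'; exact fun v => cnt_comp_perm a σ v
  have hcz : ∀ v, cnt z v = cnt c v := by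
    obtain ⟨σ, rfl⟩ := hzc; exact fun v => cnt_comp_perm c σ v
  have hcz' : ∀ v, cnt z' v = cnt c v := by
    obtain ⟨σ, rfl⟩ := hzc'; exact fun v => cnt_comp_perm c σ v
  have hcy : ∀ v, cnt y v = cnt (fun i : Fin k => if (i : ℕ) < m then 1 else 0) v := by
    obtain ⟨σ, rfl⟩ := hyb; exact fun v => cnt_comp_perm _ σ v
  have hcy' : ∀ v, cnt y' v = cnt (fun i : Fin k => if (i : ℕ) < m then 1 else 0) v := by
    obtain ⟨σ, rfl⟩ := hyb'; exact fun v => cnt_comp_perm _ σ v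
  -- the pair counts agree
  have hnp : (fun v => (npair x y v 1 : ℤ)) = (fun v => (npair x' y' v 1 : ℤ)) := by
    apply eq_of_shift_sum
    · intro w
      have e1 := cnt_x_split h01 x y hy w
      have e2 := cnt_z_split h01 x y hy w
      have e1' := cnt_x_split h01 x' y' hy' w
      have e2' := cnt_z_split h01 x' y' hy' w
      rw [hsum, hcz w] at e2
      rw [hsum', hcz' w] at e2'
      rw [hcx w] at e1
      rw [hcx' w] at e1'
      omega
    · have s1 := sum_npair x y
      have s2 := sum_npair x' y'
      rw [hcy 1] at s1; rw [hcy' 1] at s2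
      rw [← s2] at s1
      exact_mod_cast s1
  have hnp' : ∀ v, npair x y v 1 = npair x' y' v 1 := by
    intro v
    have := congrFun hnp v
    exact_mod_cast this
  have hnp0 : ∀ v, npair x y v 0 = npair x' y' v 0 := by
    intro v
    have e1 := cnt_x_split h01 x y hy v
    have e1' := cnt_x_split h01 x' y' hy' v
    rw [hcx v] at e1; rw [hcx' v] at e1'
    have := hnp' v
    omega
  -- now counts of pairs (x i, y i) agree
  have hpair : ∀ w : ZMod N × ZMod N,
      cnt (fun i => (x' i, y' i)) w = cnt (fun i => (x i, y i)) w := by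
    rintro ⟨v, ε⟩
    have key : ∀ (u w : Fin k → ZMod N),
        cnt (fun i => (u i, w i)) (v, ε) = (univ.filter (fun i => u i = v ∧ w i = ε)).card := by
      intro u w
      unfold cnt
      congr 1
      ext i
      simp [Prod.ext_iff]
    rw [key x' y', key x y]
    by_cases hε0 : ε = 0
    · subst hε0
      exact (hnp0 v).symm
    · by_cases hε1 : ε = 1
      · subst hε1
        exact (hnp' v).symm
      · rw [Finset.card_eq_zero.mpr, Finset.card_eq_zero.mpr]
        · ext i
          simp only [mem_filter, mem_univ, true_and, Finset.notMem_empty, iff_false]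
          rintro ⟨_, h⟩
          rcases hy i with h' | h' <;> rw [h'] at h
          · exact hε0 h.symm
          · exact hε1 h.symm
        · ext i
          simp only [mem_filter, mem_univ, true_and, Finset.notMem_empty, iff_false]
          rintro ⟨_, h⟩
          rcases hy' i with h' | h' <;> rw [h'] at h
          · exact hε0 h.symm
          · exact hε1 h.symm
  obtain ⟨σ, hσ⟩ := exists_perm_of_cnt hpair
  have h1 : x' = x ∘ σ := funext fun i => congrArg Prod.fst (congrFun hσ i)
  have h2 : y' = y ∘ σ := funext fun i => congrArg Prod.snd (congrFun hσ i)
  refine ⟨σ, h1, h2, ?_⟩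
  rw [← hsum, ← hsum']
  funext i
  simp [congrFun h1 i, congrFun h2 i]

/-- If `[b]` is the orbit of `(1^m, 0^{k-m})`, then the number of diagonal
`S_k`-orbits of `T([a],[b],[c])` is at most `1`. -/
theorem stmt1 (N k m : ℕ) (hN : 2 ≤ N) (hk : 1 ≤ k) (hm : m ≤ k)
    (a c : Fin k → ZMod N) :
    Mcoef a (fun i => if (i : ℕ) < m then 1 else 0) c ≤ 1 := by
  unfold Mcoef
  have hsub : Subsingleton (Quot (fun p q : Triples a (fun i => if (i : ℕ) < m then 1 else 0) c =>
      ∃ σ : Equiv.Perm (Fin k),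
        q.1.1 = p.1.1 ∘ σ ∧ q.1.2.1 = p.1.2.1 ∘ σ ∧ q.1.2.2 = p.1.2.2 ∘ σ)) := by
    constructor
    intro A B
    induction A using Quot.ind with | _ p =>
    induction B using Quot.ind with | _ q =>
    exact Quot.sound (main_rel' hN a c p.2.1 p.2.2.1 p.2.2.2.1 p.2.2.2.2 q.2.1 q.2.2.1 q.2.2.2.1 q.2.2.2.2)
  rcases isEmpty_or_nonempty (Quot (fun p q : Triples a (fun i => if (i : ℕ) < m then 1 else 0) c =>
      ∃ σ : Equiv.Perm (Fin k),
        q.1.1 = p.1.1 ∘ σ ∧ q.1.2.1 = p.1.2.1 ∘ σ ∧ q.1.2.2 = p.1.2.2 ∘ σ)) with h | h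
  · simp [Nat.card_of_isEmpty]
  · simp [Nat.card_unique]
end

section
/- Classical Pieri rule for e_m: if (μ) is a partition of length at most N and 0 ≤ m ≤ N, then in the ring of symmetric polynomials in N variables, S_{(μ)} · e_m = Σ S_{(ν)}, where the sum runs over all partitions (ν) of length at most N such that the skew shape (ν)/(μ) is a vertical m-strip (m boxes, at most one per row). -/
/-!
Multiply both sides by the Vandermonde determinant `a_δ = det (x_k ^ (N - 1 - i))`.
The bialternant formula `S_μ a_δ = a_{μ+δ}` follows from Jacobi–Trudi: the matrix
`(h_{μ_i - i + j})` times the matrix of signed elementary symmetric polynomials in the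
variables other than `x_k` is the alternant matrix `(x_k ^ (μ_i + N - 1 - i))`, because
`∏_{i ≠ k} (1 - x_i t) · ∑ h_n t^n = 1 / (1 - x_k t)`.
Writing `a_α` as an antisymmetrization and using that `e_m` is symmetric gives
`a_α e_m = ∑_{|S| = m} a_{α + 1_S}`. When `μ + 1_S` is not a partition, two adjacent rows
of `a_{μ + 1_S + δ}` coincide, so only vertical strips survive; cancel `a_δ ≠ 0`.
-/

open MvPolynomial

/-- The complete homogeneous symmetric polynomial `h_n` in `N` variables,
extended to integer indices by `h_n = 0` for `n < 0` (and `h_0 = 1`). -/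
noncomputable def hInt (N : ℕ) (z : ℤ) : MvPolynomial (Fin N) ℚ :=
  if 0 ≤ z then hsymm (Fin N) ℚ z.toNat else 0

/-- The Schur polynomial of a partition `μ` with at most `N` parts, defined by
the Jacobi–Trudi determinant `S_μ = det(h_{μ_i - i + j})`. -/
noncomputable def schur (N : ℕ) (μ : Fin N → ℕ) : MvPolynomial (Fin N) ℚ :=
  (Matrix.of fun i j : Fin N => hInt N ((μ i : ℤ) - (i : ℕ) + (j : ℕ))).det

open Finset

section CompleteHomogeneous

variable {σ R : Type*} [Fintype σ] [DecidableEq σ]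

theorem hsymm_eq_sum_finsuppAntidiag [CommSemiring R] (n : ℕ) :
    hsymm σ R n = ∑ l ∈ finsuppAntidiag univ n, ∏ i, X i ^ l i := by
  refine Finset.sum_bij (fun s _ => Multiset.toFinsupp s.1) ?_ ?_ ?_ ?_
  · intro s _
    refine mem_finsuppAntidiag.2 ⟨?_, subset_univ _⟩
    change ∑ i, (Multiset.toFinsupp s.1) i = n
    simp [Multiset.toFinsupp_apply]
  · intro s _ t _ h
    exact Sym.coe_injective (Multiset.toFinsupp.injective h)
  · intro l hl
    refine ⟨⟨Finsupp.toMultiset l, ?_⟩, mem_univ _, ?_⟩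
    · simpa [mem_finsuppAntidiag, Finsupp.sum_fintype] using hl
    · simp
  · intro s _
    rw [prod_multiset_map_count, prod_subset (subset_univ _)]
    · simp
    · intro i _ hi
      simp_all

variable [CommRing R]

theorem one_sub_C_mul_X_mul_rescale_mk_one (a : R) :
    (1 - PowerSeries.C a * PowerSeries.X) * PowerSeries.rescale a (PowerSeries.mk 1) = 1 := by
  rw [← PowerSeries.rescale_X, ← map_one (PowerSeries.rescale a), ← map_sub, ← map_mul, mul_comm,
    PowerSeries.mk_one_mul_one_sub_eq_one, map_one]

theorem coeff_prod_rescale_mk_one (n : ℕ) :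
    PowerSeries.coeff n (∏ i : σ, PowerSeries.rescale (X i : MvPolynomial σ R) (PowerSeries.mk 1))
      = hsymm σ R n := by
  simp [PowerSeries.coeff_prod, hsymm_eq_sum_finsuppAntidiag]

variable (R) in
/-- `∑_r (-1)^r e_r(x_i : i ≠ k) t^r`. -/
noncomputable def eGenErase (k : σ) : Polynomial (MvPolynomial σ R) :=
  ∏ i ∈ univ.erase k, (1 - Polynomial.C (X i) * Polynomial.X)

theorem natDegree_eGenErase_le (k : σ) :
    (eGenErase R k).natDegree ≤ Fintype.card σ - 1 := by
  unfold eGenErase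
  refine (Polynomial.natDegree_prod_le _ _).trans ?_
  refine (sum_le_sum fun i _ => (?_ : _ ≤ 1)).trans ?_
  · compute_degree
  · simp [card_erase_of_mem]

theorem sum_antidiagonal_coeff_eGenErase_mul_hsymm (k : σ) (n : ℕ) :
    ∑ p ∈ antidiagonal n, (eGenErase R k).coeff p.1 * hsymm σ R p.2 = X k ^ n := by
  have h : (eGenErase R k : PowerSeries (MvPolynomial σ R)) *
      ∏ i, PowerSeries.rescale (X i) (PowerSeries.mk 1) =
        PowerSeries.rescale (X k) (PowerSeries.mk 1) := by
    rw [← mul_prod_erase univ _ (mem_univ k), mul_left_comm, eGenErase,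
      ← Polynomial.coeToPowerSeries.ringHom_apply, map_prod, ← prod_mul_distrib]
    simp [Polynomial.coe_C, Polynomial.coe_X, one_sub_C_mul_X_mul_rescale_mk_one]
  simpa [PowerSeries.coeff_mul, coeff_prod_rescale_mk_one] using congrArg (PowerSeries.coeff n) h

end CompleteHomogeneous

section Alternant

variable {ι R : Type*} [Fintype ι] [CommRing R]

variable (R) in
noncomputable def alternant (α : ι → ℕ) : Matrix ι ι (MvPolynomial ι R) :=
  Matrix.of fun i k => X k ^ α i

theorem esymm_eq_sum_prod_perm (τ : Equiv.Perm ι) (m : ℕ) :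
    esymm ι R m = ∑ S ∈ powersetCard m univ, ∏ i ∈ S, X (τ i) := by
  rw [← rename_esymm ι R m τ, esymm, map_sum]
  simp [map_prod]

variable [DecidableEq ι]

theorem det_alternant (α : ι → ℕ) :
    (alternant R α).det = ∑ τ : Equiv.Perm ι, Equiv.Perm.sign τ • ∏ i, X (τ i) ^ α i := by
  rw [← Matrix.det_transpose, Matrix.det_apply]
  rfl

theorem det_alternant_mul_esymm (α : ι → ℕ) (m : ℕ) :
    (alternant R α).det * esymm ι R m =
      ∑ S ∈ powersetCard m univ, (alternant R fun i => α i + if i ∈ S then 1 else 0).det := by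
  simp_rw [det_alternant, sum_mul]
  rw [sum_comm]
  refine sum_congr rfl fun τ _ => ?_
  rw [esymm_eq_sum_prod_perm τ, mul_sum]
  refine sum_congr rfl fun S _ => ?_
  simp_rw [pow_add, prod_mul_distrib, pow_ite, pow_one, pow_zero, prod_ite_mem, univ_inter,
    smul_mul_assoc]

end Alternant

section Bialternant

variable {N : ℕ}

def staircase (N : ℕ) (i : Fin N) : ℕ := N - 1 - i

noncomputable def eGenMatrix (N : ℕ) : Matrix (Fin N) (Fin N) (MvPolynomial (Fin N) ℚ) :=
  Matrix.of fun j k => (eGenErase ℚ k).coeff (N - 1 - j)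

theorem sum_range_coeff_eGenErase_mul_hInt (k : Fin N) (n : ℕ) :
    ∑ r ∈ range N, (eGenErase ℚ k).coeff r * hInt N (n - r) = X k ^ n := by
  have hcoeff : ∀ r, N ≤ r → (eGenErase ℚ k).coeff r = 0 := fun r hr =>
    Polynomial.coeff_eq_zero_of_natDegree_lt <|
      (natDegree_eGenErase_le k).trans_lt (by simp only [Fintype.card_fin]; have := k.pos; omega)
  have hh : ∀ r, n < r → hInt N (n - r) = 0 := fun r hr => by
    simp only [hInt, if_neg (show ¬(0 : ℤ) ≤ n - r by omega)]
  have hmin_N : range (min N (n + 1)) ⊆ range N := range_subset_range.2 (min_le_left _ _)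
  have hmin_n : range (min N (n + 1)) ⊆ range (n + 1) := range_subset_range.2 (min_le_right _ _)
  rw [← sum_subset hmin_N fun r hr hr' => ?_, sum_subset hmin_n fun r hr hr' => ?_,
    ← sum_antidiagonal_coeff_eGenErase_mul_hsymm k n, Nat.sum_antidiagonal_eq_sum_range_succ_mk]
  · refine sum_congr rfl fun r hr => ?_
    rw [hInt, if_pos (by rw [mem_range] at hr; omega), show ((n : ℤ) - r).toNat = n - r by omega]
  · rw [hcoeff r (by simp only [mem_range] at hr hr'; omega), zero_mul]
  · rw [hh r (by simp only [mem_range] at hr hr'; omega), mul_zero]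

theorem jacobiTrudi_mul_eGenMatrix (μ : Fin N → ℕ) :
    (Matrix.of fun i j : Fin N => hInt N ((μ i : ℤ) - (i : ℕ) + (j : ℕ))) * eGenMatrix N =
      alternant ℚ fun i => μ i + staircase N i := by
  refine Matrix.ext fun i k => ?_
  rw [Matrix.mul_apply, alternant, Matrix.of_apply, ← sum_range_coeff_eGenErase_mul_hInt k,
    ← Fin.sum_univ_eq_sum_range]
  refine Fintype.sum_equiv Fin.revPerm _ _ fun j => ?_
  have hj := j.isLt
  simp only [eGenMatrix, staircase, Matrix.of_apply, Fin.revPerm_apply, Fin.val_rev]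
  rw [mul_comm, show N - 1 - j = N - (j + 1) by omega]
  congr 2
  push_cast
  omega

theorem schur_mul_det_eGenMatrix (μ : Fin N → ℕ) :
    schur N μ * (eGenMatrix N).det = (alternant ℚ fun i => μ i + staircase N i).det := by
  rw [schur, ← Matrix.det_mul, jacobiTrudi_mul_eGenMatrix]

theorem schur_zero : schur N 0 = 1 := by
  rw [schur, Matrix.det_of_isUpperTriangular]
  · exact prod_eq_one fun i _ => by simp [hInt]
  · intro i j hij
    have : (j : ℕ) < i := hij
    simp only [Matrix.of_apply, hInt, Pi.zero_apply]
    rw [if_neg (by omega)]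

theorem det_eGenMatrix : (eGenMatrix N).det = (alternant ℚ (staircase N)).det := by
  simpa [schur_zero] using schur_mul_det_eGenMatrix (0 : Fin N → ℕ)

theorem det_alternant_staircase_ne_zero {R : Type*} [CommRing R] [IsDomain R] :
    (alternant R (staircase N)).det ≠ 0 := by
  have h : (alternant R (staircase N)).transpose =
      (Matrix.vandermonde fun i => (X i : MvPolynomial (Fin N) R)).submatrix id Fin.revPerm := by
    refine Matrix.ext fun k i => ?_
    simp only [alternant, staircase, Matrix.transpose_apply, Matrix.of_apply,
      Matrix.submatrix_apply, Matrix.vandermonde_apply, id, Fin.revPerm_apply, Fin.val_rev]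
    congr 1
    omega
  rw [← Matrix.det_transpose, h, Matrix.det_permute']
  exact mul_ne_zero (((Equiv.Perm.sign _).isUnit.map (Int.castRingHom _)).ne_zero)
    (Matrix.det_vandermonde_ne_zero_iff.2 X_injective)

theorem schur_mul_det_alternant_staircase (μ : Fin N → ℕ) :
    schur N μ * (alternant ℚ (staircase N)).det =
      (alternant ℚ fun i => μ i + staircase N i).det := by
  rw [← det_eGenMatrix, schur_mul_det_eGenMatrix]

end Bialternant

theorem exists_succ_lt_of_not_antitone {α : Type*} [LinearOrder α] {N : ℕ} {f : Fin N → α}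
    (h : ¬Antitone f) : ∃ a b : Fin N, (a : ℕ) + 1 = b ∧ f a < f b := by
  cases N with
  | zero => exact absurd (fun a => a.elim0) h
  | succ n =>
    obtain ⟨i, hi⟩ := not_forall.1 (mt Fin.antitone_iff_succ_le.2 h)
    exact ⟨i.castSucc, i.succ, rfl, not_le.1 hi⟩

theorem det_alternant_add_staircase_eq_zero {R : Type*} [CommRing R] {N : ℕ} {μ : Fin N → ℕ}
    (hμ : Antitone μ) {S : Finset (Fin N)} (hS : ¬Antitone fun i => μ i + if i ∈ S then 1 else 0) :
    (alternant R fun i => (μ i + if i ∈ S then 1 else 0) + staircase N i).det = 0 := by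
  obtain ⟨a, b, hab, hlt⟩ := exists_succ_lt_of_not_antitone hS
  have hμab : μ b ≤ μ a := hμ (Fin.le_def.2 (by omega))
  refine Matrix.det_zero_of_row_eq (i := a) (j := b) (fun h => by simp [h] at hab) ?_
  funext k
  simp only [alternant, Matrix.of_apply, staircase]
  have := b.isLt
  split_ifs at hlt ⊢ <;> congr 1 <;> omega

theorem stmt7_general (N m : ℕ) (μ : Fin N → ℕ)
    (hμ : ∀ i j : Fin N, i ≤ j → μ j ≤ μ i) :
    schur N μ * esymm (Fin N) ℚ m =
      ∑ s ∈ Finset.univ.filter (fun s : Finset (Fin N) =>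
          s.card = m ∧ ∀ i j : Fin N, i ≤ j →
            (μ j + if j ∈ s then 1 else 0) ≤ (μ i + if i ∈ s then 1 else 0)),
        schur N (fun i => μ i + if i ∈ s then 1 else 0) := by
  refine mul_right_cancel₀ (det_alternant_staircase_ne_zero (N := N) (R := ℚ)) ?_
  calc schur N μ * esymm (Fin N) ℚ m * (alternant ℚ (staircase N)).det
      = (alternant ℚ fun i => μ i + staircase N i).det * esymm (Fin N) ℚ m := by
        rw [mul_right_comm, schur_mul_det_alternant_staircase]
    _ = ∑ s ∈ powersetCard m univ,
          (alternant ℚ fun i => (μ i + if i ∈ s then 1 else 0) + staircase N i).det := by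
        simp_rw [det_alternant_mul_esymm, add_right_comm _ (staircase N _)]
    _ = ∑ s ∈ univ.filter (fun s : Finset (Fin N) =>
          s.card = m ∧ ∀ i j : Fin N, i ≤ j →
            (μ j + if j ∈ s then 1 else 0) ≤ (μ i + if i ∈ s then 1 else 0)),
          (alternant ℚ fun i => (μ i + if i ∈ s then 1 else 0) + staircase N i).det := by
        refine (sum_subset (fun s hs => ?_) fun s hs hs' => ?_).symm
        · simpa using (mem_filter.1 hs).2.1
        · refine det_alternant_add_staircase_eq_zero hμ fun hanti => hs' ?_
          exact mem_filter.2 ⟨mem_univ s, (mem_powersetCard.1 hs).2, fun i j hij => hanti hij⟩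
    _ = _ := by simp_rw [sum_mul, schur_mul_det_alternant_staircase]

/-- Classical Pieri rule for `e_m`: for a partition `μ` with at most `N` parts and
`m ≤ N`, `S_μ · e_m = ∑ S_ν`, the sum over all partitions `ν` of length at most `N`
such that `ν/μ` is a vertical `m`-strip. Such `ν` are exactly those of the form
`ν i = μ i + 1` for `i` in an `m`-element subset `s` of the rows (and `ν i = μ i`
otherwise) for which `ν` is still weakly decreasing. -/
theorem stmt7 (N m : ℕ) (hm : m ≤ N) (μ : Fin N → ℕ)
    (hμ : ∀ i j : Fin N, i ≤ j → μ j ≤ μ i) :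
    schur N μ * esymm (Fin N) ℚ m =
      ∑ s ∈ Finset.univ.filter (fun s : Finset (Fin N) =>
          s.card = m ∧ ∀ i j : Fin N, i ≤ j →
            (μ j + if j ∈ s then 1 else 0) ≤ (μ i + if i ∈ s then 1 else 0)),
        schur N (fun i => μ i + if i ∈ s then 1 else 0) :=
  stmt7_general N m μ hμ
end

section
/- Let N ≥ 2 and k ≥ 1. The map sending the S_k-orbit with standard representative ((N-1)^{a_{N-1}},...,1^{a_1},0^{a_0}) (with a_0 > 0 and Σa_i = k) to the S_N-orbit in (Z/k)^N with standard representative (Σ_{i=1}^{N-1}a_i, Σ_{i=2}^{N-1}a_i, ..., a_{N-1}, 0) is a well-defined bijection from the set of S_k-orbits of (Z/N)^k having a representative with at least one zero entry onto the set of S_N-orbits of (Z/k)^N having a representative with at least one zero entry. -/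
/-- The conjugate tuple of `x : (ZMod N)^k`: its `t`-th entry (in `ZMod k`) is
the number of entries of `x` whose value is `> t`.  If `x` is the standard
representative `((N-1)^{a_{N-1}},…,1^{a_1},0^{a_0})`, this is the tuple
`(∑_{i≥1} a_i, ∑_{i≥2} a_i, …, a_{N-1}, 0)`. -/
def conjTuple {N k : ℕ} (x : Fin k → ZMod N) : Fin N → ZMod k :=
  fun t => ((Finset.univ.filter fun p : Fin k => (t : ℕ) < (x p).val).card : ZMod k)

open Finset

namespace Stmt18

variable {N k : ℕ}

def cnt (x : Fin k → ZMod N) (u : ℕ) : ℕ :=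
  (Finset.univ.filter fun p => u < (x p).val).card

lemma conjTuple_eq (x : Fin k → ZMod N) (t : Fin N) :
    conjTuple x t = ((cnt x t.val : ℕ) : ZMod k) := rfl

lemma mem_orb_self (x : Fin k → ZMod N) : x ∈ orb x := ⟨1, rfl⟩

lemma orb_comp (x : Fin k → ZMod N) (σ : Equiv.Perm (Fin k)) : orb (x ∘ σ) = orb x := by
  ext y
  constructor
  · rintro ⟨τ, rfl⟩
    exact ⟨σ * τ, by funext p; simp [Function.comp]⟩
  · rintro ⟨τ, rfl⟩
    exact ⟨σ⁻¹ * τ, by funext p; simp [Function.comp]⟩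

lemma orb_eq_of_mem {x y : Fin k → ZMod N} (h : y ∈ orb x) : orb y = orb x := by
  obtain ⟨σ, rfl⟩ := h; exact orb_comp x σ

lemma cnt_comp (x : Fin k → ZMod N) (σ : Equiv.Perm (Fin k)) (u : ℕ) :
    cnt (x ∘ σ) u = cnt x u := by
  unfold cnt
  exact Finset.card_equiv σ (by simp)

lemma conjTuple_comp (x : Fin k → ZMod N) (σ : Equiv.Perm (Fin k)) :
    conjTuple (x ∘ σ) = conjTuple x := by
  funext t; rw [conjTuple_eq, conjTuple_eq, cnt_comp]

lemma cnt_anti (x : Fin k → ZMod N) {u v : ℕ} (h : u ≤ v) : cnt x v ≤ cnt x u := by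
  apply Finset.card_le_card
  intro p hp
  simp only [Finset.mem_filter, Finset.mem_univ, true_and] at *
  omega

lemma cnt_lt_of_zero [NeZero N] (hk : 0 < k) {x : Fin k → ZMod N} {i : Fin k}
    (hxi : x i = 0) (u : ℕ) : cnt x u < k := by
  have hzv : (x i).val = 0 := by rw [hxi]; exact ZMod.val_zero
  have hsub : (Finset.univ.filter fun p => u < (x p).val) ⊆ Finset.univ.erase i := by
    intro p hp
    simp only [Finset.mem_filter, Finset.mem_univ, true_and] at hp
    refine Finset.mem_erase.mpr ⟨?_, Finset.mem_univ p⟩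
    rintro rfl
    omega
  have := Finset.card_le_card hsub
  rw [Finset.card_erase_of_mem (Finset.mem_univ i), Finset.card_univ, Fintype.card_fin] at this
  unfold cnt
  omega

lemma cnt_zero_of_ge [NeZero N] {x : Fin k → ZMod N} (hN : 0 < N) {u : ℕ} (hu : N - 1 ≤ u) :
    cnt x u = 0 := by
  unfold cnt
  rw [Finset.card_eq_zero, Finset.filter_eq_empty_iff]
  intro p _
  have := ZMod.val_lt (n := N) (x p)
  omega

lemma conjTuple_last [NeZero N] (hN : 0 < N) (x : Fin k → ZMod N) :
    conjTuple x ⟨N - 1, Nat.sub_lt hN one_pos⟩ = 0 := by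
  rw [conjTuple_eq]
  show ((cnt x (N - 1) : ℕ) : ZMod k) = 0
  rw [cnt_zero_of_ge hN le_rfl]
  exact Nat.cast_zero

lemma val_conjTuple [NeZero k] {x : Fin k → ZMod N} (t : Fin N) (h : cnt x t.val < k) :
    (conjTuple x t).val = cnt x t.val := by
  rw [conjTuple_eq]; exact ZMod.val_cast_of_lt h

lemma galois (c : Fin N → ℕ) (hc : ∀ a b : Fin N, a ≤ b → c b ≤ c a) (u : Fin N) (s : ℕ) :
    (u : ℕ) < (Finset.univ.filter fun t => s < c t).card ↔ s < c u := by
  constructor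
  · intro h
    by_contra hs
    push_neg at hs
    have hsub : (Finset.univ.filter fun t => s < c t) ⊆ Finset.Iio u := by
      intro t ht
      simp only [Finset.mem_filter, Finset.mem_Iio] at *
      by_contra htu
      push_neg at htu
      exact absurd ht.2 (by have := hc u t htu; omega)
    have := Finset.card_le_card hsub
    rw [Fin.card_Iio] at this
    omega
  · intro h
    have hsub : Finset.Iic u ⊆ (Finset.univ.filter fun t => s < c t) := by
      intro t ht
      simp only [Finset.mem_filter, Finset.mem_Iic] at *
      exact ⟨Finset.mem_univ t, by have := hc t u ht; omega⟩
    have := Finset.card_le_card hsub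
    rw [Fin.card_Iic] at this
    omega

lemma card_val_lt {m : ℕ} (hm : m ≤ k) :
    (Finset.univ.filter fun s : Fin k => (s : ℕ) < m).card = m := by
  have : (Finset.univ.filter fun s : Fin k => (s : ℕ) < m) =
      (Finset.range m).attachFin (fun a ha => lt_of_lt_of_le (Finset.mem_range.mp ha) hm) := by
    ext s
    simp [Finset.mem_attachFin]
  rw [this, Finset.card_attachFin, Finset.card_range]

lemma cnt_cc (hN : 0 < N) (hk : 0 < k) [NeZero N] [NeZero k]
    {x : Fin k → ZMod N} {i : Fin k} (hxi : x i = 0) (u : ℕ) :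
    cnt (conjTuple (conjTuple x)) u = cnt x u := by
  by_cases hu : u < N
  · have hccval : ∀ s : Fin k, (conjTuple (conjTuple x) s).val = cnt (conjTuple x) s.val := by
      intro s
      exact val_conjTuple s (by
        have := conjTuple_last hN x
        calc cnt (conjTuple x) s.val < N := cnt_lt_of_zero hN this s.val)
    have hcval : ∀ t : Fin N, (conjTuple x t).val = cnt x t.val := fun t =>
      val_conjTuple t (cnt_lt_of_zero hk hxi t.val)
    have step1 : cnt (conjTuple (conjTuple x)) u
        = (Finset.univ.filter fun s : Fin k => u < cnt (conjTuple x) s.val).card := by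
      unfold cnt
      congr 1
      apply Finset.filter_congr
      intro s _
      rw [hccval s]
      exact Iff.rfl
    have step2 : ∀ s : Fin k, cnt (conjTuple x) s.val
        = (Finset.univ.filter fun t : Fin N => (s : ℕ) < cnt x t.val).card := by
      intro s
      unfold cnt
      congr 1
      apply Finset.filter_congr
      intro t _
      rw [hcval t]
      exact Iff.rfl
    have hanti : ∀ a b : Fin N, a ≤ b → cnt x b.val ≤ cnt x a.val := fun a b h =>
      cnt_anti x (Fin.le_iff_val_le_val.mp h)
    have step3 : cnt (conjTuple (conjTuple x)) u
        = (Finset.univ.filter fun s : Fin k => (s : ℕ) < cnt x u).card := by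
      rw [step1]
      congr 1
      apply Finset.filter_congr
      intro s _
      rw [step2 s]
      exact galois (fun t => cnt x t.val) hanti ⟨u, hu⟩ s.val
    rw [step3, card_val_lt (le_of_lt (cnt_lt_of_zero hk hxi u))]
  · push_neg at hu
    rw [cnt_zero_of_ge hN (by omega), cnt_zero_of_ge hN (u := u) (by omega)]

lemma exists_perm [NeZero N] (x y : Fin k → ZMod N) (h : ∀ u, cnt x u = cnt y u) :
    ∃ σ : Equiv.Perm (Fin k), y = x ∘ σ := by
  have fib : ∀ (z : Fin k → ZMod N) (v : ZMod N),
      (Finset.univ.filter fun p => z p = v).card =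
      (if v.val = 0 then k - cnt z 0 else cnt z (v.val - 1) - cnt z v.val) := by
    intro z v
    have hval : ∀ p, z p = v ↔ (z p).val = v.val :=
      fun p => ⟨fun h => by rw [h], fun h => ZMod.val_injective N h⟩
    by_cases hv : v.val = 0
    · simp only [hv, if_pos]
      have : (Finset.univ.filter fun p => z p = v) =
          Finset.univ.filter fun p => ¬ (0 < (z p).val) := by
        ext p; simp [hval p, hv]
      rw [this, Finset.filter_not, Finset.card_sdiff_of_subset (Finset.filter_subset _ _)]
      simp [cnt]
    · simp only [hv, if_neg]
      obtain ⟨m, hm⟩ : ∃ m, v.val = m + 1 := ⟨v.val - 1, by omega⟩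
      have hsplit : (Finset.univ.filter fun p => m < (z p).val) =
          (Finset.univ.filter fun p => z p = v) ∪
          (Finset.univ.filter fun p => v.val < (z p).val) := by
        rw [← Finset.filter_or]
        apply Finset.filter_congr
        intro p _
        simp only [eq_iff_iff, hval p, hm]
        omega
      have hdisj : Disjoint (Finset.univ.filter fun p => z p = v)
          (Finset.univ.filter fun p => v.val < (z p).val) := by
        rw [Finset.disjoint_filter]
        intro p _ hp
        rw [hval p] at hp
        omega
      have hcard := congrArg Finset.card hsplit
      rw [Finset.card_union_of_disjoint hdisj] at hcard
      have : cnt z m = (Finset.univ.filter fun p => z p = v).card + cnt z v.val := hcard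
      have hle : cnt z v.val ≤ cnt z m := cnt_anti z (by omega)
      have : (Finset.univ.filter fun p => z p = v).card = cnt z m - cnt z v.val := by omega
      rw [this, hm]
      simp
  have hcard : ∀ v : ZMod N, Fintype.card {p // y p = v} = Fintype.card {p // x p = v} := by
    intro v
    simp only [Fintype.card_subtype, fib, h]
  refine ⟨(Equiv.sigmaFiberEquiv y).symm.trans
    ((Equiv.sigmaCongrRight fun v => Fintype.equivOfCardEq (hcard v)).trans
      (Equiv.sigmaFiberEquiv x)), funext fun p => ?_⟩
  show y p = x _
  have : ((Equiv.sigmaFiberEquiv y).symm.trans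
      ((Equiv.sigmaCongrRight fun v => Fintype.equivOfCardEq (hcard v)).trans
        (Equiv.sigmaFiberEquiv x))) p
      = ((Fintype.equivOfCardEq (hcard (y p))) ⟨p, rfl⟩ : {q // x q = y p}).1 := rfl
  rw [this]
  exact ((Fintype.equivOfCardEq (hcard (y p))) ⟨p, rfl⟩).2.symm

noncomputable def Fmap (N k : ℕ) [NeZero N] [NeZero k]
    (S : {S : Set (Fin k → ZMod N) // (∃ x, S = orb x) ∧ ∃ y ∈ S, ∃ i, y i = 0}) :
    {S : Set (Fin N → ZMod k) // (∃ x, S = orb x) ∧ ∃ y ∈ S, ∃ i, y i = 0} :=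
  ⟨orb (conjTuple S.2.1.choose), ⟨_, rfl⟩, conjTuple S.2.1.choose, mem_orb_self _,
    ⟨N - 1, Nat.sub_lt (Nat.pos_of_ne_zero (NeZero.ne N)) one_pos⟩,
    conjTuple_last (Nat.pos_of_ne_zero (NeZero.ne N)) _⟩

lemma Fmap_spec (N k : ℕ) [NeZero N] [NeZero k]
    (S : {S : Set (Fin k → ZMod N) // (∃ x, S = orb x) ∧ ∃ y ∈ S, ∃ i, y i = 0})
    (x : Fin k → ZMod N) (hx : S.1 = orb x) : (Fmap N k S).1 = orb (conjTuple x) := by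
  have hx₀ : S.1 = orb S.2.1.choose := S.2.1.choose_spec
  have : x ∈ orb S.2.1.choose := by rw [← hx₀, hx]; exact mem_orb_self x
  obtain ⟨σ, rfl⟩ := this
  show orb (conjTuple S.2.1.choose) = orb (conjTuple (S.2.1.choose ∘ σ))
  rw [conjTuple_comp]

lemma rep_zero (N k : ℕ)
    (S : {S : Set (Fin k → ZMod N) // (∃ x, S = orb x) ∧ ∃ y ∈ S, ∃ i, y i = 0}) :
    ∃ x, S.1 = orb x ∧ ∃ i, x i = 0 := by
  obtain ⟨⟨x, hx⟩, y, hy, i, hyi⟩ := S.2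
  refine ⟨y, ?_, i, hyi⟩
  rw [hx] at hy ⊢
  exact (orb_eq_of_mem hy).symm

lemma Fmap_Fmap (N k : ℕ) (hN : 0 < N) (hk : 0 < k) [NeZero N] [NeZero k]
    (S : {S : Set (Fin k → ZMod N) // (∃ x, S = orb x) ∧ ∃ y ∈ S, ∃ i, y i = 0}) :
    Fmap k N (Fmap N k S) = S := by
  obtain ⟨x₀, hS, i, hx₀i⟩ := rep_zero N k S
  apply Subtype.ext
  rw [Fmap_spec k N _ (conjTuple x₀) (Fmap_spec N k S x₀ hS), hS]
  obtain ⟨σ, hσ⟩ := exists_perm x₀ (conjTuple (conjTuple x₀))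
    (fun u => (cnt_cc hN hk hx₀i u).symm)
  rw [hσ, orb_comp]

end Stmt18

/-- Rank-level duality on orbits: conjugation of standard representatives gives a
well-defined bijection from the set of `S_k`-orbits of `(ZMod N)^k` having a
representative with at least one zero entry onto the set of `S_N`-orbits of
`(ZMod k)^N` having a representative with at least one zero entry; the orbit of
any representative `x` is sent to the orbit of its conjugate tuple. -/
theorem stmt18 (N k : ℕ) (hN : 2 ≤ N) (hk : 1 ≤ k) :
    ∃ e : {S : Set (Fin k → ZMod N) // (∃ x, S = orb x) ∧ ∃ y ∈ S, ∃ i, y i = 0} ≃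
          {S : Set (Fin N → ZMod k) // (∃ x, S = orb x) ∧ ∃ y ∈ S, ∃ i, y i = 0},
      ∀ (S : {S : Set (Fin k → ZMod N) // (∃ x, S = orb x) ∧ ∃ y ∈ S, ∃ i, y i = 0})
        (x : Fin k → ZMod N), S.1 = orb x → (e S).1 = orb (conjTuple x) := by
  haveI : NeZero N := ⟨by omega⟩
  haveI : NeZero k := ⟨by omega⟩
  exact ⟨⟨Stmt18.Fmap N k, Stmt18.Fmap k N,
    Stmt18.Fmap_Fmap N k (by omega) (by omega),
    Stmt18.Fmap_Fmap k N (by omega) (by omega)⟩,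
    fun S x hx => Stmt18.Fmap_spec N k S x hx⟩
end

section
/- Let N ≥ 2, k ≥ 1, m ≤ k, and let λ = m·λ_1. Let μ be a level-k dominant weight of A_{N-1} with partition (μ) ⊆ (N-1)×k rectangle, and ν another level-k dominant weight. Then the fusion coefficient N_{μ,λ}^{(k)ν} equals the orbit multiplicity M_{[μ],[λ]}^{(k)[ν]}, where [μ],[λ],[ν] are the S_k-orbits of (Z/N)^k corresponding to μ, λ, ν. Here N_{μ,λ}^{(k)ν} is characterized as being 1 if there exists a partition (ν̄) contained in the N×k rectangle such that (ν̄)/(μ) is a horizontal m-strip and ν̄ differs from (ν) by adding a constant to all N parts, and 0 otherwise. -/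
/-- The `k`-tuple in `(ZMod N)^k` corresponding to a level-`k` weight with
partition `p`: entry `q` is the height of the `(q+1)`-st column of the diagram
of `p` (the standard representative of the associated orbit). -/
def tupleOf {N : ℕ} (k : ℕ) (p : Fin N → ℕ) : Fin k → ZMod N :=
  fun q => ((Finset.univ.filter fun i : Fin N => (q : ℕ) < p i).card : ZMod N)

open Finset

/-!
Let `A` be the column lengths of `μ` (all `< N`) and `1_s` the indicator of `s ⊆ Fin k`, so that
`[λ]` consists of the `1_s` with `#s = m`. Up to the diagonal action every triple has the form
`(A, 1_s, A + 1_s)`. The column lengths `A + 1_s` are those of the shapes `ν̄ ⊇ μ` with `ν̄/μ` a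
horizontal `m`-strip, and reducing them mod `N` turns full columns into empty ones, which is
exactly the passage from `ν̄` to `ν`; so triples exist iff the fusion coefficient is `1`.

Any two triples are equivalent. If `A + 1_s` and `A + 1_{s'}` have the same content, the number
`t_s(u)` of points of `s` in the fibre `A = u` satisfies
`t_s(u) - t_s(u - 1) = t_{s'}(u) - t_{s'}(u - 1)`, so `t_s - t_{s'}` is constant on `ZMod N`; it
sums to `#s - #s' = 0`, hence vanishes, and a permutation preserving `A` carries `s` to `s'`.
-/

section Perm

variable {α β : Type*} [Fintype α]

theorem card_filter_comp_perm (σ : Equiv.Perm α) (P : α → Prop) [DecidablePred P] :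
    #{q | P (σ q)} = #{q | P q} :=
  card_bij' (fun q _ => σ q) (fun q _ => σ.symm q) (by simp) (by simp) (by simp) (by simp)

theorem exists_perm_comp_eq_of_card_fiber_eq [DecidableEq β] {f g : α → β}
    (h : ∀ v, #{q | f q = v} = #{q | g q = v}) : ∃ σ : Equiv.Perm α, f ∘ σ = g := by
  have e : ∀ v, {q // f q = v} ≃ {q // g q = v} := fun v =>
    Fintype.equivOfCardEq (by simpa [Fintype.card_subtype] using h v)
  refine ⟨(Equiv.sigmaFiberEquiv g).symm.trans
    ((Equiv.sigmaCongrRight fun v => (e v).symm).trans (Equiv.sigmaFiberEquiv f)), ?_⟩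
  funext q
  simpa [Equiv.sigmaFiberEquiv, Equiv.sigmaCongrRight] using ((e (g q)).symm ⟨q, rfl⟩).2

end Perm

section CharFn

variable {α R : Type*} [DecidableEq α]

def charFn [Zero R] [One R] (s : Finset α) : α → R := fun q => if q ∈ s then 1 else 0

theorem charFn_comp_perm [Zero R] [One R] (s : Finset α) (σ : Equiv.Perm α) :
    (charFn s : α → R) ∘ σ = charFn (s.map σ.symm.toEmbedding) := by
  funext q
  simp [charFn, Finset.mem_map_equiv]

theorem natCast_charFn [AddMonoidWithOne R] (s : Finset α) (q : α) :
    ((charFn s q : ℕ) : R) = charFn s q := by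
  simp only [charFn, Nat.cast_ite, Nat.cast_one, Nat.cast_zero]

theorem charFn_le_one (s : Finset α) (q : α) : (charFn s q : ℕ) ≤ 1 := by
  unfold charFn; split_ifs <;> omega

theorem sum_charFn [Fintype α] (s : Finset α) : ∑ q, (charFn s q : ℕ) = #s := by
  simp [charFn]

theorem exists_perm_mem_iff [Fintype α] {s t : Finset α} (h : #s = #t) :
    ∃ σ : Equiv.Perm α, ∀ q, σ q ∈ t ↔ q ∈ s := by
  obtain ⟨σ, hσ⟩ := exists_perm_comp_eq_of_card_fiber_eq
    (f := fun q => decide (q ∈ t)) (g := fun q => decide (q ∈ s)) fun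
      | true => by simpa using h.symm
      | false => by simp [filter_not, card_sdiff, h]
  exact ⟨σ, fun q => by simpa using congrFun hσ q⟩

end CharFn

section Orbit

variable {N k : ℕ}

theorem mem_orb_self (x : Fin k → ZMod N) : x ∈ orb x := ⟨1, rfl⟩

theorem comp_perm_mem_orb {x y : Fin k → ZMod N} (hy : y ∈ orb x) (σ : Equiv.Perm (Fin k)) :
    y ∘ σ ∈ orb x := by
  obtain ⟨ρ, rfl⟩ := hy
  exact ⟨σ.trans ρ, rfl⟩

theorem mem_orb_iff_card_fiber_eq {x y : Fin k → ZMod N} :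
    y ∈ orb x ↔ ∀ v, #{q | y q = v} = #{q | x q = v} := by
  refine ⟨?_, fun h => ?_⟩
  · rintro ⟨σ, rfl⟩ v
    exact card_filter_comp_perm σ (x · = v)
  · obtain ⟨σ, hσ⟩ := exists_perm_comp_eq_of_card_fiber_eq fun v => (h v).symm
    exact ⟨σ, hσ.symm⟩

theorem mem_orb_charFn_iff (t : Finset (Fin k)) {y : Fin k → ZMod N} :
    y ∈ orb (charFn t) ↔ ∃ s : Finset (Fin k), #s = #t ∧ y = charFn s := by
  constructor
  · rintro ⟨σ, rfl⟩
    exact ⟨t.map σ.symm.toEmbedding, card_map _, charFn_comp_perm t σ⟩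
  · rintro ⟨s, hs, rfl⟩
    obtain ⟨σ, hσ⟩ := exists_perm_mem_iff hs
    exact ⟨σ, funext fun q => by simp [charFn, hσ]⟩

/-- `Mcoef a b c` is `Nat.card (Quot (TripleRel a b c))` by definition. -/
def TripleRel (a b c : Fin k → ZMod N) (p q : Triples a b c) : Prop :=
  ∃ σ : Equiv.Perm (Fin k),
    q.1.1 = p.1.1 ∘ σ ∧ q.1.2.1 = p.1.2.1 ∘ σ ∧ q.1.2.2 = p.1.2.2 ∘ σ

variable {a b c : Fin k → ZMod N}

theorem tripleRel_of_comp {p q : Triples a b c} (σ : Equiv.Perm (Fin k))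
    (hx : q.1.1 = p.1.1 ∘ σ) (hy : q.1.2.1 = p.1.2.1 ∘ σ) : TripleRel a b c p q :=
  ⟨σ, hx, hy, by rw [← q.2.2.2.2, ← p.2.2.2.2, hx, hy]; rfl⟩

theorem exists_base_of_triple (p : Triples a b c) :
    ∃ y ∈ orb b, a + y ∈ orb c ∧
      ∃ σ : Equiv.Perm (Fin k), p.1.1 = a ∘ σ ∧ p.1.2.1 = y ∘ σ := by
  obtain ⟨⟨x, y, z⟩, ⟨σ, hx⟩, hy, ⟨τ, hz⟩, hsum⟩ := p
  dsimp only at hx hy hz hsum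
  subst hx hz
  refine ⟨y ∘ σ.symm, comp_perm_mem_orb hy _, ⟨σ.symm.trans τ, funext fun q => ?_⟩, σ, rfl,
    funext fun q => by simp⟩
  simpa using congrFun hsum (σ.symm q)

theorem Mcoef_eq_zero_of (h : ∀ y ∈ orb b, a + y ∉ orb c) : Mcoef a b c = 0 := by
  have : IsEmpty (Triples a b c) := ⟨fun p =>
    let ⟨y, hy, hyc, _⟩ := exists_base_of_triple p
    h y hy hyc⟩
  exact Nat.card_of_isEmpty

theorem Mcoef_eq_one_of (hex : ∃ y ∈ orb b, a + y ∈ orb c)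
    (huniq : ∀ y ∈ orb b, ∀ y' ∈ orb b, a + y ∈ orb c → a + y' ∈ orb c →
      ∃ σ : Equiv.Perm (Fin k), a ∘ σ = a ∧ y ∘ σ = y') :
    Mcoef a b c = 1 := by
  obtain ⟨y, hy, hyc⟩ := hex
  have : Subsingleton (Quot (TripleRel a b c)) := ⟨fun P Q =>
    Quot.induction_on₂ P Q fun p q => Quot.sound <| by
      obtain ⟨y, hy, hyc, σ, hx, hyσ⟩ := exists_base_of_triple p
      obtain ⟨y', hy', hyc', σ', hx', hyσ'⟩ := exists_base_of_triple q
      obtain ⟨τ, hτa, hτy⟩ := huniq y hy y' hy' hyc hyc'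
      refine tripleRel_of_comp (σ'.trans (τ.trans σ.symm)) ?_ ?_
      · rw [hx', hx]; funext r; simpa using (congrFun hτa (σ' r)).symm
      · rw [hyσ', hyσ, ← hτy]; funext r; simp⟩
  exact Nat.card_eq_one_iff_unique.2
    ⟨this, ⟨Quot.mk _ ⟨(a, y, a + y), mem_orb_self a, hy, hyc, rfl⟩⟩⟩

end Orbit

section Stabilizer

variable {α : Type*} [Fintype α] [DecidableEq α]

theorem card_fiber_add_charFn {G : Type*} [AddGroupWithOne G] [DecidableEq G] (a : α → G)
    (s : Finset α) (v : G) :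
    #{q | a q + charFn s q = v} + #{q | q ∈ s ∧ a q = v}
      = #{q | q ∈ s ∧ a q = v - 1} + #{q | a q = v} := by
  simp only [card_filter, ← sum_add_distrib]
  refine sum_congr rfl fun q _ => ?_
  by_cases hq : q ∈ s <;> simp [charFn, hq, eq_sub_iff_add_eq]

theorem card_fiber_mem_not {β : Type*} [DecidableEq β] (a : α → β) (s : Finset α) (u : β) :
    #{q | a q = u ∧ q ∉ s} = #{q | a q = u} - #{q | q ∈ s ∧ a q = u} := by
  have : #{q | a q = u ∧ q ∉ s} + #{q | q ∈ s ∧ a q = u} = #{q | a q = u} := by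
    simp only [card_filter, ← sum_add_distrib]
    refine sum_congr rfl fun q _ => ?_
    by_cases hq : q ∈ s <;> simp [hq]
  omega

theorem card_mem_fiber_eq {N : ℕ} [NeZero N] (a : α → ZMod N) {s s' : Finset α}
    (hcard : #s = #s')
    (h : ∀ v, #{q | a q + charFn s q = v} = #{q | a q + charFn s' q = v}) (u : ZMod N) :
    #{q | q ∈ s ∧ a q = u} = #{q | q ∈ s' ∧ a q = u} := by
  set d : ZMod N → ℤ := fun u => #{q | q ∈ s ∧ a q = u} - #{q | q ∈ s' ∧ a q = u}
  have hper : Function.Periodic d 1 := fun u => by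
    have hs := card_fiber_add_charFn a s (u + 1)
    have hs' := card_fiber_add_charFn a s' (u + 1)
    have hu := h (u + 1)
    rw [add_sub_cancel_right] at hs hs'
    simp only [d]
    omega
  have hconst : ∀ u, d u = d 0 := fun u => by
    simpa using hper.nat_mul_eq u.val
  have hfiber : ∀ t : Finset α, ∑ u, #{q | q ∈ t ∧ a q = u} = #t := fun t => by
    rw [card_eq_sum_card_fiberwise (f := a) (t := univ) (fun _ _ => mem_univ _)]
    exact sum_congr rfl fun u _ => congrArg card (by ext; simp)
  have hsum : ∑ u, d u = 0 := by
    simp only [d, sum_sub_distrib, ← Nat.cast_sum, hfiber, hcard, sub_self]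
  rw [sum_congr rfl fun u _ => hconst u, sum_const, card_univ, ZMod.card, nsmul_eq_mul,
    mul_eq_zero] at hsum
  have hu := hconst u
  have := NeZero.ne N
  simp only [d] at hu hsum
  omega

theorem exists_perm_fixing_of_card_fiber_add_charFn_eq {N : ℕ} [NeZero N] (a : α → ZMod N)
    {s s' : Finset α} (hcard : #s = #s')
    (h : ∀ v, #{q | a q + charFn s q = v} = #{q | a q + charFn s' q = v}) :
    ∃ σ : Equiv.Perm α, a ∘ σ = a ∧ charFn s ∘ σ = (charFn s' : α → ZMod N) := by
  obtain ⟨σ, hσ⟩ := exists_perm_comp_eq_of_card_fiber_eq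
    (f := fun q => (a q, decide (q ∈ s))) (g := fun q => (a q, decide (q ∈ s'))) fun
      | (u, true) => by simpa [and_comm] using card_mem_fiber_eq a hcard h u
      | (u, false) => by
        simpa [card_fiber_mem_not] using congrArg (_ - ·) (card_mem_fiber_eq a hcard h u)
  refine ⟨σ, funext fun q => congrArg Prod.fst (congrFun hσ q), funext fun q => ?_⟩
  have := congrArg Prod.snd (congrFun hσ q)
  simp_all [charFn]

end Stabilizer

section Conjugate

variable {m n : ℕ}

/-- For `p` the parts of a partition in an `m × n` box, `conjugate n p` lists its column
lengths; `tupleOf k p` is `conjugate k p` reduced mod `N`. -/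
def conjugate (n : ℕ) (p : Fin m → ℕ) : Fin n → ℕ := fun q => #{i | (q : ℕ) < p i}

theorem conjugate_antitone (p : Fin m → ℕ) {q r : Fin n} (hqr : q ≤ r) :
    conjugate n p r ≤ conjugate n p q :=
  card_le_card fun i hi => by
    simp only [mem_filter, mem_univ, true_and] at hi ⊢
    exact lt_of_le_of_lt hqr hi

theorem conjugate_le (p : Fin m → ℕ) (q : Fin n) : conjugate n p q ≤ m :=
  (card_filter_le _ _).trans_eq (card_fin m)

theorem conjugate_lt (p : Fin m → ℕ) {i₀ : Fin m} (h : p i₀ = 0) (q : Fin n) :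
    conjugate n p q < m := by
  refine (card_lt_card (ssubset_univ_iff.2 fun huniv => ?_)).trans_eq (card_fin m)
  have hi₀ := mem_univ i₀
  rw [← huniv] at hi₀
  simp [h] at hi₀

theorem conjugate_mono {p p' : Fin m → ℕ} (h : ∀ i, p i ≤ p' i) (q : Fin n) :
    conjugate n p q ≤ conjugate n p' q :=
  card_le_card fun i hi => by
    simp only [mem_filter, mem_univ, true_and] at hi ⊢
    exact hi.trans_le (h i)

theorem lt_conjugate_iff {p : Fin m → ℕ} (hp : ∀ i j, i ≤ j → p j ≤ p i) (i : Fin m)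
    (q : Fin n) : (i : ℕ) < conjugate n p q ↔ (q : ℕ) < p i :=
  Fin.lt_card_filter_univ_iff_apply_of_imp _ fun _ _ hji hq => hq.trans_le (hp _ _ hji)

theorem conjugate_conjugate {p : Fin m → ℕ} (hp : ∀ i j, i ≤ j → p j ≤ p i)
    (hpn : ∀ i, p i ≤ n) : conjugate m (conjugate n p) = p := by
  funext i
  change #{q : Fin n | (i : ℕ) < conjugate n p q} = p i
  simp only [lt_conjugate_iff hp]
  rw [Fin.card_filter_val_lt, min_eq_right (hpn i)]

theorem sum_conjugate {p : Fin m → ℕ} (hpn : ∀ i, p i ≤ n) :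
    ∑ q, conjugate n p q = ∑ i, p i := by
  simp only [conjugate, card_filter]
  rw [sum_comm]
  refine sum_congr rfl fun i _ => ?_
  rw [← card_filter, Fin.card_filter_val_lt, min_eq_right (hpn i)]

/-- Horizontal strips are exactly the skew shapes whose columns grow by at most one box. -/
theorem conjugate_le_conjugate_add_one {p p' : Fin m → ℕ} (hp : ∀ i j, i ≤ j → p j ≤ p i)
    (hp' : ∀ i j, i ≤ j → p' j ≤ p' i) (hstrip : ∀ i j : Fin m, (i : ℕ) + 1 = j → p' j ≤ p i)
    (q : Fin n) : conjugate n p' q ≤ conjugate n p q + 1 := by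
  by_contra! hlt
  have hj : conjugate n p q + 1 < m := hlt.trans_le (conjugate_le p' q)
  have h' := (lt_conjugate_iff hp' ⟨_, hj⟩ q).1 hlt
  have h := (lt_conjugate_iff hp ⟨_, hj.trans' (Nat.lt_succ_self _)⟩ q).2
    (h'.trans_le (hstrip _ _ rfl))
  exact lt_irrefl _ h

end Conjugate

section Reduction

variable {N k : ℕ}

theorem tupleOf_add_const_mem_orb {c : ℕ} {p : Fin N → ℕ} (hck : c ≤ k)
    (hpc : ∀ i, p i + c ≤ k) : tupleOf k (fun i => p i + c) ∈ orb (tupleOf k p) := by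
  let τ : Equiv.Perm (Fin k) := (finCongr (Nat.add_sub_cancel' hck).symm).trans
    (finAddFlip.trans (finCongr (Nat.sub_add_cancel hck)))
  have hτ : ∀ q : Fin k, ((τ q : Fin k) : ℕ) = if (q : ℕ) < c then k - c + q else q - c := by
    rintro ⟨q, hq⟩
    split_ifs with hqc
    · simp [τ, finAddFlip_apply_mk_left hqc]
    · simp [τ, finAddFlip_apply_mk_right (not_lt.1 hqc)]
  refine ⟨τ, funext fun q => ?_⟩
  simp only [tupleOf, Function.comp_apply]
  by_cases hq : (q : ℕ) < c
  · rw [filter_true_of_mem fun i _ => by omega, filter_false_of_mem fun i _ => by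
      rw [hτ, if_pos hq]; have := hpc i; omega]
    simp
  · congr 2
    ext i
    simp only [mem_filter, mem_univ, true_and, hτ, if_neg hq]
    omega

theorem tupleOf_add_charFn (p : Fin N → ℕ) (s : Finset (Fin k)) :
    tupleOf k p + charFn s = fun q => ((conjugate k p q + charFn s q : ℕ) : ZMod N) := by
  funext q
  rw [Nat.cast_add, natCast_charFn]
  rfl

theorem conjugate_eq_add_card_of_mem_orb {h : Fin k → ℕ} (hh : ∀ q, h q ≤ N) {p : Fin N → ℕ}
    (hp : ∀ i j, i ≤ j → p j ≤ p i) (hpk : ∀ i, p i ≤ k) {i₀ : Fin N} (hp0 : p i₀ = 0)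
    (horb : (fun q => (h q : ZMod N)) ∈ orb (tupleOf k p)) (i : Fin N) :
    conjugate N h i = p i + #{q | h q = N} := by
  obtain ⟨τ, hτ⟩ := horb
  have hmod : ∀ q, h q % N = conjugate k p (τ q) := fun q => by
    have : h q % N = conjugate k p (τ q) % N :=
      (ZMod.natCast_eq_natCast_iff' _ _ _).1 (congrFun hτ q)
    rwa [Nat.mod_eq_of_lt (conjugate_lt p hp0 _)] at this
  have hreduce : ∀ q, (i : ℕ) < h q ∧ h q ≠ N ↔ (i : ℕ) < conjugate k p (τ q) := fun q => by
    rw [← hmod q]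
    rcases (hh q).lt_or_eq with hlt | heq
    · rw [Nat.mod_eq_of_lt hlt]; omega
    · rw [heq, Nat.mod_self]; omega
  calc conjugate N h i = #{q | (i : ℕ) < h q ∧ h q ≠ N} + #{q | h q = N} := by
        simp only [conjugate, card_filter, ← sum_add_distrib]
        refine sum_congr rfl fun q _ => ?_
        have := i.isLt
        split_ifs <;> omega
    _ = p i + #{q | h q = N} := by
        simp only [hreduce, card_filter_comp_perm τ fun q => (i : ℕ) < conjugate k p q]
        rw [← congrFun (conjugate_conjugate hp hpk) i]
        rfl

end Reduction

section Strip

variable {N k m : ℕ}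

/-- `νbar` is a partition in the `N × k` box and `νbar / μ` is a horizontal strip of `m` boxes. -/
def IsHorizontalStrip (k m : ℕ) (μ νbar : Fin N → ℕ) : Prop :=
  (∀ i j : Fin N, i ≤ j → νbar j ≤ νbar i) ∧ (∀ i, νbar i ≤ k) ∧ (∀ i, μ i ≤ νbar i) ∧
    ∑ i, (νbar i - μ i) = m ∧ ∀ i j : Fin N, (i : ℕ) + 1 = j → νbar j ≤ μ i

variable {μ : Fin N → ℕ}

theorem conjugate_add_charFn_le {i₀ : Fin N} (hμ0 : μ i₀ = 0) (s : Finset (Fin k)) (q : Fin k) :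
    conjugate k μ q + charFn s q ≤ N := by
  have := conjugate_lt μ hμ0 q
  have := charFn_le_one s q
  omega

theorem exists_conjugate_eq_add_charFn_of_isHorizontalStrip
    (hμ : ∀ i j, i ≤ j → μ j ≤ μ i) (hμk : ∀ i, μ i ≤ k) {νbar : Fin N → ℕ}
    (hνbar : IsHorizontalStrip k m μ νbar) :
    ∃ s : Finset (Fin k), #s = m ∧ ∀ q, conjugate k νbar q = conjugate k μ q + charFn s q := by
  obtain ⟨hνa, hνk, hμν, hsum, hadj⟩ := hνbar
  set s : Finset (Fin k) := {q | conjugate k μ q < conjugate k νbar q}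
  have hcol : ∀ q, conjugate k νbar q = conjugate k μ q + charFn s q := fun q => by
    have := conjugate_mono hμν q
    have := conjugate_le_conjugate_add_one hμ hνa hadj q
    simp only [s, charFn, mem_filter, mem_univ, true_and]
    split_ifs <;> omega
  refine ⟨s, ?_, hcol⟩
  have htotal : ∑ q, conjugate k νbar q = ∑ q, conjugate k μ q + #s := by
    rw [← sum_charFn, ← sum_add_distrib]
    exact sum_congr rfl fun q _ => hcol q
  rw [sum_conjugate hνk, sum_conjugate hμk] at htotal
  rw [← hsum, sum_tsub_distrib _ fun i _ => hμν i]
  omega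

theorem isHorizontalStrip_conjugate_add_charFn (hμ : ∀ i j, i ≤ j → μ j ≤ μ i)
    (hμk : ∀ i, μ i ≤ k) {i₀ : Fin N} (hμ0 : μ i₀ = 0) {s : Finset (Fin k)} (hs : #s = m) :
    IsHorizontalStrip k m μ (conjugate N fun q => conjugate k μ q + charFn s q) := by
  set h : Fin k → ℕ := fun q => conjugate k μ q + charFn s q
  have hμ_eq : ∀ i, conjugate N (conjugate k μ) i = μ i :=
    congrFun (conjugate_conjugate hμ hμk)
  have hhN : ∀ q, h q ≤ N := conjugate_add_charFn_le hμ0 s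
  have hsub : ∀ i, μ i ≤ conjugate N h i := fun i =>
    (hμ_eq i).symm.trans_le (conjugate_mono (fun q => Nat.le_add_right _ _) i)
  refine ⟨fun i j => conjugate_antitone h, fun i => conjugate_le h i, hsub, ?_,
    fun i j hij => ?_⟩
  · have htotal : ∑ i, conjugate N h i = ∑ i, μ i + m := by
      rw [sum_conjugate hhN, sum_add_distrib, sum_charFn, sum_conjugate hμk, hs]
    rw [sum_tsub_distrib _ fun i _ => hsub i, htotal]
    omega
  · rw [← hμ_eq i]
    refine card_le_card fun q hq => ?_
    have := charFn_le_one s q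
    simp only [h, mem_filter, mem_univ, true_and] at hq ⊢
    omega

theorem exists_isHorizontalStrip_iff {pν : Fin N → ℕ} (hμ : ∀ i j, i ≤ j → μ j ≤ μ i)
    (hμk : ∀ i, μ i ≤ k) (hν : ∀ i j, i ≤ j → pν j ≤ pν i) (hνk : ∀ i, pν i ≤ k) {i₀ : Fin N}
    (hμ0 : μ i₀ = 0) (hν0 : pν i₀ = 0) :
    (∃ νbar, IsHorizontalStrip k m μ νbar ∧ ∃ c, ∀ i, νbar i = pν i + c) ↔
      ∃ s : Finset (Fin k), #s = m ∧ tupleOf k μ + charFn s ∈ orb (tupleOf k pν) := by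
  constructor
  · rintro ⟨νbar, hstrip, c, hc⟩
    obtain ⟨s, hs, hcol⟩ := exists_conjugate_eq_add_charFn_of_isHorizontalStrip hμ hμk hstrip
    have hνbark : ∀ i, pν i + c ≤ k := fun i => hc i ▸ hstrip.2.1 i
    have hshift : tupleOf k μ + charFn s = tupleOf k fun i => pν i + c := by
      rw [tupleOf_add_charFn, ← funext hc]
      funext q
      rw [← hcol]
      rfl
    refine ⟨s, hs, hshift ▸ tupleOf_add_const_mem_orb ?_ hνbark⟩
    have := hνbark i₀
    omega
  · rintro ⟨s, hs, horb⟩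
    rw [tupleOf_add_charFn] at horb
    exact ⟨_, isHorizontalStrip_conjugate_add_charFn hμ hμk hμ0 hs, _,
      conjugate_eq_add_card_of_mem_orb (conjugate_add_charFn_le hμ0 s) hν hνk hν0 horb⟩

end Strip

/-- Fusion coefficients for `λ = m·λ_1` equal orbit multiplicities.  Let `μ, ν`
be level-`k` dominant weights of `A_{N-1}` with partitions `pμ, pν ⊆ (N-1)×k`
(encoded with `N` parts, last part `0`).  The fusion coefficient
`N_{μ,λ}^{(k)ν}` is `1` if there is a partition `ν̄ ⊆ N×k` with `ν̄/pμ` a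
horizontal `m`-strip and `ν̄` equal to `pν` plus a constant in each part, and
`0` otherwise; in either case it equals `M_{[μ],[λ]}^{(k)[ν]}`, where
`[μ], [ν]` are the orbits of the tuples of `pμ, pν` and `[λ]` that of
`(1^m, 0^{k-m})`. -/
theorem stmt19 (N k m : ℕ) (hN : 2 ≤ N) (hm : m ≤ k)
    (pμ pν : Fin N → ℕ)
    (hμa : ∀ i j : Fin N, i ≤ j → pμ j ≤ pμ i)
    (hμlast : pμ ⟨N - 1, by omega⟩ = 0) (hμk : ∀ i, pμ i ≤ k)
    (hνa : ∀ i j : Fin N, i ≤ j → pν j ≤ pν i)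
    (hνlast : pν ⟨N - 1, by omega⟩ = 0) (hνk : ∀ i, pν i ≤ k) :
    ((∃ νbar : Fin N → ℕ,
        (∀ i j : Fin N, i ≤ j → νbar j ≤ νbar i) ∧ (∀ i, νbar i ≤ k) ∧
        (∀ i, pμ i ≤ νbar i) ∧ (∑ i, (νbar i - pμ i)) = m ∧
        (∀ i j : Fin N, (i : ℕ) + 1 = (j : ℕ) → νbar j ≤ pμ i) ∧
        ∃ c : ℕ, ∀ i, νbar i = pν i + c) →
      Mcoef (tupleOf k pμ) (fun i => if (i : ℕ) < m then 1 else 0) (tupleOf k pν) = 1) ∧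
    ((¬ ∃ νbar : Fin N → ℕ,
        (∀ i j : Fin N, i ≤ j → νbar j ≤ νbar i) ∧ (∀ i, νbar i ≤ k) ∧
        (∀ i, pμ i ≤ νbar i) ∧ (∑ i, (νbar i - pμ i)) = m ∧
        (∀ i j : Fin N, (i : ℕ) + 1 = (j : ℕ) → νbar j ≤ pμ i) ∧
        ∃ c : ℕ, ∀ i, νbar i = pν i + c) →
      Mcoef (tupleOf k pμ) (fun i => if (i : ℕ) < m then 1 else 0) (tupleOf k pν) = 0) := by
  have : NeZero N := ⟨by omega⟩
  have hfirst : (fun i : Fin k => if (i : ℕ) < m then (1 : ZMod N) else 0) =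
      charFn {i : Fin k | (i : ℕ) < m} := by
    funext i
    simp [charFn]
  have hcard : #{i : Fin k | (i : ℕ) < m} = m := by
    rw [Fin.card_filter_val_lt, min_eq_right hm]
  have hstrip := exists_isHorizontalStrip_iff (m := m) hμa hμk hνa hνk hμlast hνlast
  simp only [IsHorizontalStrip, and_assoc] at hstrip
  rw [hfirst]
  refine ⟨fun h => ?_, fun h => Mcoef_eq_zero_of fun y hy hyc => h (hstrip.2 ?_)⟩
  · obtain ⟨s, hs, hsc⟩ := hstrip.1 h
    refine Mcoef_eq_one_of ⟨_, (mem_orb_charFn_iff _).2 ⟨s, hs.trans hcard.symm, rfl⟩, hsc⟩ ?_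
    intro y hy y' hy' hyc hy'c
    obtain ⟨s, hs, rfl⟩ := (mem_orb_charFn_iff _).1 hy
    obtain ⟨s', hs', rfl⟩ := (mem_orb_charFn_iff _).1 hy'
    exact exists_perm_fixing_of_card_fiber_add_charFn_eq _ (hs.trans hs'.symm) fun v =>
      (mem_orb_iff_card_fiber_eq.1 hyc v).trans (mem_orb_iff_card_fiber_eq.1 hy'c v).symm
  · obtain ⟨s, hs, rfl⟩ := (mem_orb_charFn_iff _).1 hy
    exact ⟨s, hs.trans hcard, hyc⟩
end
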